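/- arXiv:2008.05069 — 2 statements merged into one kernel-verified Lean document; each statement's English description precedes it below -/
import Mathlib

section
/- For every positive integer n, the graph K^1_{n, C(n,2)} (the complete bipartite graph with parts of sizes n and n(n−1)/2 in which every edge is subdivided exactly once) contains every graph on n vertices as a vertex-minor. -/
open SimpleGraph

/-! ### Basic operations: local complementation, pivoting, vertex-minors -/

/-- Local complementation at a vertex `v`: the adjacency between each pair of
neighbours of `v` is toggled. -/
def localComp {V : Type*} (G : SimpleGraph V) (v : V) : SimpleGraph V where
  Adj a b := (G.Adj a b ∧ ¬(G.Adj v a ∧ G.Adj v b)) ∨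
    (a ≠ b ∧ ¬ G.Adj a b ∧ G.Adj v a ∧ G.Adj v b)
  symm := by
    constructor
    rintro a b (⟨h1, h2⟩ | ⟨h1, h2, h3, h4⟩)
    · exact Or.inl ⟨h1.symm, fun hc => h2 ⟨hc.2, hc.1⟩⟩
    · exact Or.inr ⟨h1.symm, fun hc => h2 hc.symm, h4, h3⟩
  loopless := by
    constructor
    rintro a (⟨h1, _⟩ | ⟨h1, _⟩)
    · exact G.irrefl h1
    · exact h1 rfl

/-- Pivoting an edge `uv`: `G ∧ uv = G * u * v * u`. -/
def pivotG {V : Type*} (G : SimpleGraph V) (u v : V) : SimpleGraph V :=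
  localComp (localComp (localComp G u) v) u

/-- Finite simple graphs, concretely represented on `Fin n`. -/
abbrev FinGraph := Σ n : ℕ, SimpleGraph (Fin n)

/-- One step in the construction of a vertex-minor: pass to an isomorphic copy,
perform a local complementation, or delete a vertex. -/
def VMStep (G H : FinGraph) : Prop :=
  Nonempty (G.2 ≃g H.2) ∨
  (∃ v : Fin G.1, Nonempty ((localComp G.2 v) ≃g H.2)) ∨
  (∃ v : Fin G.1, Nonempty ((G.2.induce {u | u ≠ v}) ≃g H.2))

/-- One step in the construction of a pivot-minor: pass to an isomorphic copy,
pivot an edge, or delete a vertex. -/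
def PMStep (G H : FinGraph) : Prop :=
  Nonempty (G.2 ≃g H.2) ∨
  (∃ u v : Fin G.1, G.2.Adj u v ∧ Nonempty ((pivotG G.2 u v) ≃g H.2)) ∨
  (∃ v : Fin G.1, Nonempty ((G.2.induce {u | u ≠ v}) ≃g H.2))

/-- `H` is a vertex-minor of `G` (both given concretely on `Fin _`). -/
def IsVertexMinorFG (H G : FinGraph) : Prop := Relation.ReflTransGen VMStep G H

/-- `H` is a pivot-minor of `G` (both given concretely on `Fin _`). -/
def IsPivotMinorFG (H G : FinGraph) : Prop := Relation.ReflTransGen PMStep G H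

/-- A finite graph represented concretely on `Fin (Nat.card V)`. -/
noncomputable def toFinGraph {V : Type*} [Finite V] (G : SimpleGraph V) : FinGraph :=
  ⟨Nat.card V, G.comap (Finite.equivFin V).symm⟩

/-- `H` is a vertex-minor of `G`. -/
def HasVertexMinor {V W : Type*} [Finite V] [Finite W]
    (G : SimpleGraph V) (H : SimpleGraph W) : Prop :=
  IsVertexMinorFG (toFinGraph H) (toFinGraph G)

/-- `H` is a pivot-minor of `G`. -/
def HasPivotMinor {V W : Type*} [Finite V] [Finite W]
    (G : SimpleGraph V) (H : SimpleGraph W) : Prop :=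
  IsPivotMinorFG (toFinGraph H) (toFinGraph G)

/-- A class of finite graphs closed under isomorphism, local complementation and
vertex deletion. -/
def VertexMinorClosed (𝒢 : Set FinGraph) : Prop :=
  (∀ G ∈ 𝒢, ∀ H : FinGraph, Nonempty (G.2 ≃g H.2) → H ∈ 𝒢) ∧
  (∀ G ∈ 𝒢, ∀ v : Fin G.1, (⟨G.1, localComp G.2 v⟩ : FinGraph) ∈ 𝒢) ∧
  (∀ G ∈ 𝒢, ∀ v : Fin G.1, toFinGraph (G.2.induce {u | u ≠ v}) ∈ 𝒢)

/-- A class of finite graphs closed under isomorphism, pivoting and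
vertex deletion. -/
def PivotMinorClosed (𝒢 : Set FinGraph) : Prop :=
  (∀ G ∈ 𝒢, ∀ H : FinGraph, Nonempty (G.2 ≃g H.2) → H ∈ 𝒢) ∧
  (∀ G ∈ 𝒢, ∀ u v : Fin G.1, G.2.Adj u v → (⟨G.1, pivotG G.2 u v⟩ : FinGraph) ∈ 𝒢) ∧
  (∀ G ∈ 𝒢, ∀ v : Fin G.1, toFinGraph (G.2.induce {u | u ≠ v}) ∈ 𝒢)

/-! ### Chromatic data -/

/-- The chromatic number, as a natural number (graphs here are finite). -/
noncomputable def chi {V : Type*} (G : SimpleGraph V) : ℕ := G.chromaticNumber.toNat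

/-- The ball of radius `ρ` around `v`: all vertices at distance at most `ρ` from `v`. -/
def ballSet {V : Type*} (G : SimpleGraph V) (v : V) (ρ : ℕ) : Set V :=
  {u | ∃ p : G.Walk v u, p.length ≤ ρ}

/-- `χ^{(ρ)}(G)`: the largest chromatic number of a `ρ`-ball of `G`. -/
noncomputable def chiBall {V : Type*} (G : SimpleGraph V) (ρ : ℕ) : ℕ :=
  ⨆ v : V, chi (G.induce (ballSet G v ρ))

/-- The distance from `u` to `v` is at least `n` (in particular, this holds
vacuously for unreachable pairs). -/
def distGE {V : Type*} (G : SimpleGraph V) (u v : V) (n : ℕ) : Prop :=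
  ∀ p : G.Walk u v, n ≤ p.length

/-- A stable (independent) set of vertices. -/
def IsStableSet {V : Type*} (G : SimpleGraph V) (A : Set V) : Prop :=
  ∀ a ∈ A, ∀ b ∈ A, ¬ G.Adj a b

/-- `A` covers `B`: every vertex of `B` has a neighbour in `A`. -/
def Covers {V : Type*} (G : SimpleGraph V) (A B : Set V) : Prop :=
  ∀ b ∈ B, ∃ a ∈ A, G.Adj a b

/-- `A` and `B` are anti-complete: there are no edges between them. -/
def AntiComplete {V : Type*} (G : SimpleGraph V) (A B : Set V) : Prop :=
  ∀ a ∈ A, ∀ b ∈ B, ¬ G.Adj a b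

/-- An induced path of `G`, given as a walk: it is a path, and the only edges of `G`
between its vertices are the edges of the path. -/
def IsInducedPath {V : Type*} (G : SimpleGraph V) {a b : V} (p : G.Walk a b) : Prop :=
  p.IsPath ∧ ∀ x ∈ p.support, ∀ y ∈ p.support, G.Adj x y → p.toSubgraph.Adj x y
/-! ### Big cliques and bloated trees -/

/-- A big clique: a maximal clique (w.r.t. vertex inclusion) of size at least 3. -/
def IsBigClique {V : Type*} (G : SimpleGraph V) (s : Finset V) : Prop :=
  G.IsClique ↑s ∧ 3 ≤ s.card ∧ ∀ t : Finset V, G.IsClique ↑t → s ⊆ t → t = s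

/-- Two vertices are related when they lie in a common big clique. -/
def bigCliqueRel {V : Type*} (G : SimpleGraph V) (u v : V) : Prop :=
  u = v ∨ ∃ s : Finset V, IsBigClique G s ∧ u ∈ s ∧ v ∈ s

/-- The graph obtained by contracting every big clique to a single vertex. -/
def contractBigCliques {V : Type*} (G : SimpleGraph V) :
    SimpleGraph (Quot (bigCliqueRel G)) where
  Adj a b := a ≠ b ∧ ∃ u v, G.Adj u v ∧ Quot.mk _ u = a ∧ Quot.mk _ v = b
  symm := by
    constructor
    rintro a b ⟨hne, u, v, h, hu, hv⟩
    exact ⟨hne.symm, v, u, h.symm, hv, hu⟩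
  loopless := ⟨fun a h => h.1 rfl⟩

/-- A bloated tree: every edge is in at most one big clique, vertices of a big
`k`-clique have degree at most `k`, and contracting all big cliques yields a tree. -/
def IsBloatedTree {V : Type*} (T : SimpleGraph V) : Prop :=
  (∀ u v, T.Adj u v → ∀ s t : Finset V, IsBigClique T s → IsBigClique T t →
    u ∈ s → v ∈ s → u ∈ t → v ∈ t → s = t) ∧
  (∀ s : Finset V, IsBigClique T s → ∀ v ∈ s, (T.neighborSet v).ncard ≤ s.card) ∧
  (contractBigCliques T).IsTree

/-- A leaf: a vertex of degree at most 1. -/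
def IsLeaf {V : Type*} (G : SimpleGraph V) (v : V) : Prop :=
  (G.neighborSet v).ncard ≤ 1

/-- A branching vertex of a bloated tree: a vertex of degree at least 3 that is
not contained in a triangle. -/
def IsBranching {V : Type*} (G : SimpleGraph V) (v : V) : Prop :=
  3 ≤ (G.neighborSet v).ncard ∧ ¬ ∃ a b, G.Adj v a ∧ G.Adj v b ∧ G.Adj a b

/-! ### Dangling paths and contractions -/

/-- The path `p` dangles from `X`: the set of vertices outside `p` with a
neighbour on `p` is exactly `X`. -/
def DanglesFrom {V : Type*} (G : SimpleGraph V) {a b : V} (p : G.Walk a b)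
    (X : Set V) : Prop :=
  {v | v ∉ p.support ∧ ∃ u ∈ p.support, G.Adj v u} = X

/-- The path `p` dangles oddly from `X`: moreover every vertex of `X` has an odd
number of neighbours on `p`. -/
def DanglesOddly {V : Type*} (G : SimpleGraph V) {a b : V} (p : G.Walk a b)
    (X : Set V) : Prop :=
  DanglesFrom G p X ∧ ∀ x ∈ X, Odd ({u | u ∈ p.support ∧ G.Adj x u}.ncard)

/-- Contract the set `S` to the single vertex `a₀` (for `a₀ ∈ S` with `G[S]`
connected this is contraction of all edges inside `S`). -/
def contractSet {V : Type*} (G : SimpleGraph V) (S : Set V) (a₀ : V) :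
    SimpleGraph {w : V // w ∉ S ∨ w = a₀} where
  Adj u v := u ≠ v ∧
    ((u.1 ∉ S ∧ v.1 ∉ S ∧ G.Adj u.1 v.1) ∨
     (u.1 = a₀ ∧ v.1 ∉ S ∧ ∃ s ∈ S, G.Adj s v.1) ∨
     (v.1 = a₀ ∧ u.1 ∉ S ∧ ∃ s ∈ S, G.Adj u.1 s))
  symm := by
    constructor
    rintro u v ⟨hne, h⟩
    refine ⟨hne.symm, ?_⟩
    rcases h with ⟨h1, h2, h3⟩ | ⟨h1, h2, s, hs, hadj⟩ | ⟨h1, h2, s, hs, hadj⟩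
    · exact Or.inl ⟨h2, h1, h3.symm⟩
    · exact Or.inr (Or.inr ⟨h1, h2, s, hs, hadj.symm⟩)
    · exact Or.inr (Or.inl ⟨h1, h2, s, hs, hadj.symm⟩)
  loopless := ⟨fun u h => h.1 rfl⟩

/-! ### Ramsey numbers -/

/-- Every graph on `Fin N` contains a clique of size `n` or a stable set of size `m`. -/
def RamseyProp (N n m : ℕ) : Prop :=
  ∀ G : SimpleGraph (Fin N),
    (∃ s : Finset (Fin N), G.IsNClique n s) ∨ (∃ s : Finset (Fin N), Gᶜ.IsNClique m s)

/-- The Ramsey number `R(n,m)`: the least `N` such that every graph on at least `N`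
vertices contains a clique of size `n` or a stable set of size `m`. -/
noncomputable def ramsey (n m : ℕ) : ℕ := sInf {N | ∀ M, N ≤ M → RamseyProp M n m}

/-! ### Subdivided complete bipartite graphs and interfered versions -/

/-- The vertex set of (an interfered) `K¹_{n,m}`: the `x_i`, the `y_j`, and the
subdivision vertices `z_{i,j}`. -/
abbrev IVert (n m : ℕ) := Fin n ⊕ Fin m ⊕ Fin n × Fin m

/-- `K¹_{n,m}`: the complete bipartite graph `K_{n,m}` with every edge subdivided
exactly once. -/
def KOneBip (n m : ℕ) : SimpleGraph (IVert n m) :=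
  SimpleGraph.fromRel (fun a b => ∃ i j,
    (a = Sum.inl i ∧ b = Sum.inr (Sum.inr (i, j))) ∨
    (a = Sum.inr (Sum.inl j) ∧ b = Sum.inr (Sum.inr (i, j))))

/-- The pairs that may be adjacent in an interfered `K¹_{n,m}`. -/
def InterferedAllowed (n m : ℕ) (a b : IVert n m) : Prop :=
  (∃ i j, a = Sum.inl i ∧ b = Sum.inr (Sum.inr (i, j))) ∨
  (∃ i j, a = Sum.inr (Sum.inl j) ∧ b = Sum.inr (Sum.inr (i, j))) ∨
  (∃ (k i : Fin n) (j : Fin m), k < i ∧ a = Sum.inl k ∧ b = Sum.inr (Sum.inr (i, j)))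

/-- An interfered `K¹_{n,m}`: all edges `x_i z_{i,j}` and `z_{i,j} y_j` are present,
and all other edges are of the form `x_k z_{i,j}` with `k < i`. -/
def IsInterfered (n m : ℕ) (G : SimpleGraph (IVert n m)) : Prop :=
  (∀ i j, G.Adj (Sum.inl i) (Sum.inr (Sum.inr (i, j)))) ∧
  (∀ i j, G.Adj (Sum.inr (Sum.inl j)) (Sum.inr (Sum.inr (i, j)))) ∧
  (∀ a b, G.Adj a b → InterferedAllowed n m a b ∨ InterferedAllowed n m b a)
/-! ### Long covers -/

/-- A long cover `(L⁰, L¹, L², L³)` of a set `C`. -/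
def IsLongCover {V : Type*} (G : SimpleGraph V) (L : Fin 4 → Set V) (C : Set V) : Prop :=
  (∀ i j : Fin 4, i ≠ j → Disjoint (L i) (L j)) ∧
  (∀ i : Fin 4, Disjoint (L i) C) ∧
  (G.induce (L 0)).Connected ∧
  Covers G (L 0) (L 1) ∧ Covers G (L 1) (L 2) ∧ Covers G (L 2) (L 3) ∧
  Covers G (L 3) C ∧
  AntiComplete G C (L 0) ∧ AntiComplete G C (L 1) ∧ AntiComplete G C (L 2) ∧
  AntiComplete G (L 0) (L 2) ∧ AntiComplete G (L 0) (L 3) ∧ AntiComplete G (L 1) (L 3)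

/-- A long `q`-cover of a set `C`. -/
def IsLongQCover {V : Type*} (G : SimpleGraph V) {q : ℕ}
    (ℒ : Fin q → Fin 4 → Set V) (C : Set V) : Prop :=
  (∀ i, IsLongCover G (ℒ i) C) ∧
  (∀ i j, i ≠ j →
    Disjoint (ℒ i 0 ∪ ℒ i 1 ∪ ℒ i 2 ∪ ℒ i 3) (ℒ j 0 ∪ ℒ j 1 ∪ ℒ j 2 ∪ ℒ j 3)) ∧
  (∀ i j, i < j →
    AntiComplete G (ℒ j 0 ∪ ℒ j 1 ∪ ℒ j 2) (ℒ i 0 ∪ ℒ i 1 ∪ ℒ i 2 ∪ ℒ i 3))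

/-! ### Multicovers -/

/-- A multicover `(N_x : x ∈ X)` of a set `C`, where `X` is presented as an
injective tuple `x : Fin m → V` (whose ordering is the total order on `X`). -/
def IsMulticover {V : Type*} (G : SimpleGraph V) {m : ℕ}
    (x : Fin m → V) (N : Fin m → Set V) (C : Set V) : Prop :=
  Function.Injective x ∧
  (∀ i, N i ⊆ G.neighborSet (x i)) ∧
  (∀ i, x i ∉ C) ∧
  (∀ i j, x i ∉ N j) ∧
  (∀ i, Disjoint (N i) C) ∧
  (∀ i j, i ≠ j → Disjoint (N i) (N j)) ∧
  (∀ i j, ¬ G.Adj (x i) (x j)) ∧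
  (∀ i, ∀ u ∈ C, ¬ G.Adj (x i) u) ∧
  (∀ i, ∀ u ∈ C, ∃ w ∈ N i, G.Adj w u) ∧
  (∀ i j, i < j → ∀ u ∈ N i, ¬ G.Adj (x j) u)

/-- A pure multicover: no `x ∈ X` has a neighbour in `N_y` for `y ≠ x`. -/
def IsPureMC {V : Type*} (G : SimpleGraph V) {m : ℕ}
    (x : Fin m → V) (N : Fin m → Set V) : Prop :=
  ∀ i j, i ≠ j → ∀ u ∈ N i, ¬ G.Adj (x j) u

/-- An impure multicover: for `x ≺ y`, `x` is complete to `N_y`. -/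
def IsImpureMC {V : Type*} (G : SimpleGraph V) {m : ℕ}
    (x : Fin m → V) (N : Fin m → Set V) : Prop :=
  ∀ i j, i < j → ∀ u ∈ N j, G.Adj (x i) u

/-! In `K¹_{n,m}` the column `c` consists of `y_c` and the paths `x_k – z_{k,c} – y_c`.
Local complementation at `z_{i,c}` and then at `z_{j,c}` makes `y_c` adjacent to `x_i` and `x_j`;
local complementation at `y_c` then toggles the pair `x_i x_j`, and every other adjacency it
changes has an end in column `c`, while the other columns are untouched. A graph on `n` vertices
has at most `C(n,2)` edges, so each edge gets a column of its own; deleting everything but the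
`x_k` leaves the graph. -/

def SimpleGraph.Iso.localComp {V W : Type*} {G : SimpleGraph V} {H : SimpleGraph W}
    (e : G ≃g H) (v : V) : localComp G v ≃g localComp H (e v) where
  toEquiv := e.toEquiv
  map_rel_iff' {a b} := by
    change (_root_.localComp H (e v)).Adj (e a) (e b) ↔ _
    simp only [_root_.localComp, e.map_adj_iff, ne_eq, EmbeddingLike.apply_eq_iff_eq]

noncomputable def toFinGraphIso {V : Type*} [Finite V] (G : SimpleGraph V) :
    (toFinGraph G).2 ≃g G where
  toEquiv := (Finite.equivFin V).symm
  map_rel_iff' := Iff.rfl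

namespace HasVertexMinor

variable {U V W : Type*} [Finite U] [Finite V] [Finite W]

theorem trans {G : SimpleGraph U} {H : SimpleGraph V} {K : SimpleGraph W}
    (hGH : HasVertexMinor G H) (hHK : HasVertexMinor H K) : HasVertexMinor G K :=
  Relation.ReflTransGen.trans hGH hHK

theorem of_iso {G : SimpleGraph V} {H : SimpleGraph W} (e : G ≃g H) : HasVertexMinor G H :=
  .single (Or.inl ⟨((toFinGraphIso G).trans e).trans (toFinGraphIso H).symm⟩)

theorem localComp (G : SimpleGraph V) (v : V) : HasVertexMinor G (localComp G v) := by
  obtain ⟨w, rfl⟩ := (toFinGraphIso G).surjective v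
  exact .single (Or.inr (Or.inl ⟨w,
    ⟨((toFinGraphIso G).localComp w).trans (toFinGraphIso (_root_.localComp G _)).symm⟩⟩))

theorem deleteVertex (G : SimpleGraph V) (v : V) :
    HasVertexMinor G (G.induce {u | u ≠ v}) := by
  let e := Finite.equivFin V
  refine .single (Or.inr (Or.inr ⟨e v, ⟨?_⟩⟩))
  refine RelIso.trans ?_ (toFinGraphIso (G.induce {u | u ≠ v})).symm
  exact ⟨e.symm.subtypeEquiv fun a => (not_congr e.symm_apply_eq).symm, Iff.rfl⟩

theorem induce (G : SimpleGraph V) (S : Set V) : HasVertexMinor G (G.induce S) := by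
  suffices h : ∀ T : Set V, HasVertexMinor G (G.induce Tᶜ) by
    rw [← compl_compl S]; exact h Sᶜ
  intro T
  induction T, T.toFinite using Set.Finite.induction_on with
  | empty => rw [Set.compl_empty]; exact of_iso (induceUnivIso G).symm
  | @insert v T hvT _ ih =>
    refine ih.trans ((deleteVertex _ ⟨v, hvT⟩).trans (of_iso ?_))
    refine ⟨⟨fun w => ⟨w.1.1, ?_⟩, fun w => ⟨⟨w.1, ?_⟩, ?_⟩, fun _ => rfl, fun _ => rfl⟩,
      Iff.rfl⟩
    · exact fun h => h.elim (fun hv => w.2 (Subtype.ext hv)) w.1.2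
    · exact fun h => w.2 (Set.mem_insert_of_mem v h)
    · exact fun h => w.2 (congrArg Subtype.val h ▸ Set.mem_insert v T)

theorem of_embedding {G : SimpleGraph V} {H : SimpleGraph W} (f : H ↪g G) :
    HasVertexMinor G H :=
  (induce G (Set.range f)).trans (of_iso f.isoInduceRange.symm)

end HasVertexMinor

theorem localComp_adj {V : Type*} (G : SimpleGraph V) (v a b : V) :
    (localComp G v).Adj a b ↔ Xor (G.Adj a b) (a ≠ b ∧ G.Adj v a ∧ G.Adj v b) := by
  have := G.ne_of_adj (a := a) (b := b)
  simp only [localComp, Xor]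
  tauto

theorem localComp_adj_of_not_adj {V : Type*} {G : SimpleGraph V} {v a : V} (h : ¬G.Adj v a)
    (b : V) : (localComp G v).Adj a b ↔ G.Adj a b := by
  simp [localComp_adj, h, xor_def]

section KOneBip

variable {n m : ℕ}

abbrev xV (i : Fin n) : IVert n m := Sum.inl i
abbrev yV (c : Fin m) : IVert n m := Sum.inr (Sum.inl c)
abbrev zV (k : Fin n) (c : Fin m) : IVert n m := Sum.inr (Sum.inr (k, c))

def IsPristineColumn (H : SimpleGraph (IVert n m)) (c : Fin m) : Prop :=
  (∀ b, H.Adj (yV c) b ↔ ∃ k, b = zV k c) ∧ ∀ k b, H.Adj (zV k c) b ↔ b = xV k ∨ b = yV c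

theorem kOneBip_isPristineColumn (c : Fin m) : IsPristineColumn (KOneBip n m) c := by
  constructor <;> intros <;> simp [KOneBip] <;> grind

theorem kOneBip_not_adj_xV (a b : Fin n) : ¬(KOneBip n m).Adj (xV a) (xV b) := by
  simp [KOneBip]

def toggleAlongColumn (H : SimpleGraph (IVert n m)) (i j : Fin n) (c : Fin m) :
    SimpleGraph (IVert n m) :=
  localComp (localComp (localComp H (zV i c)) (zV j c)) (yV c)

theorem hasVertexMinor_toggleAlongColumn (H : SimpleGraph (IVert n m)) (i j : Fin n)
    (c : Fin m) : HasVertexMinor H (toggleAlongColumn H i j c) :=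
  ((HasVertexMinor.localComp _ _).trans (HasVertexMinor.localComp _ _)).trans
    (HasVertexMinor.localComp _ _)

theorem toggleAlongColumn_adj_of_not_adj {H : SimpleGraph (IVert n m)} {i j : Fin n}
    {c : Fin m} {u : IVert n m} (hi : ¬H.Adj u (zV i c)) (hj : ¬H.Adj u (zV j c))
    (hy : ¬H.Adj u (yV c)) (b : IVert n m) :
    (toggleAlongColumn H i j c).Adj u b ↔ H.Adj u b := by
  have h1 : ∀ b, (localComp H (zV i c)).Adj u b ↔ H.Adj u b :=
    localComp_adj_of_not_adj fun h => hi h.symm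
  have h2 : ∀ b, (localComp (localComp H (zV i c)) (zV j c)).Adj u b ↔ H.Adj u b :=
    fun b => (localComp_adj_of_not_adj (fun h => hj ((h1 _).1 h.symm)) b).trans (h1 b)
  exact (localComp_adj_of_not_adj (fun h => hy ((h2 _).1 h.symm)) b).trans (h2 b)

theorem IsPristineColumn.toggleAlongColumn {H : SimpleGraph (IVert n m)} {c c' : Fin m}
    (h : IsPristineColumn H c') (hc : c' ≠ c) (i j : Fin n) :
    IsPristineColumn (toggleAlongColumn H i j c) c' := by
  obtain ⟨hy, hz⟩ := h
  refine ⟨fun b => (toggleAlongColumn_adj_of_not_adj ?_ ?_ ?_ b).trans (hy b),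
    fun k b => (toggleAlongColumn_adj_of_not_adj ?_ ?_ ?_ b).trans (hz k b)⟩ <;>
    simp [hy, hz, hc.symm]

theorem toggleAlongColumn_adj_xV {H : SimpleGraph (IVert n m)} {c : Fin m}
    (h : IsPristineColumn H c) {i j : Fin n} (hij : i ≠ j) (a b : Fin n) :
    (toggleAlongColumn H i j c).Adj (xV a) (xV b) ↔
      Xor (H.Adj (xV a) (xV b)) (s(a, b) = s(i, j)) := by
  obtain ⟨hy, hz⟩ := h
  set H₁ := localComp H (zV i c)
  set H₂ := localComp H₁ (zV j c)
  have h₁z : ∀ b, H₁.Adj (zV j c) b ↔ H.Adj (zV j c) b :=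
    localComp_adj_of_not_adj (by simp [hz])
  have h₂x : ∀ a b, H₂.Adj (xV a) (xV b) ↔ H.Adj (xV a) (xV b) := by
    intro a b
    rw [localComp_adj, h₁z, h₁z, hz, hz, localComp_adj, hz, hz]
    simp only [xor_def]
    grind
  have h₂y : ∀ a, H₂.Adj (yV c) (xV a) ↔ a = i ∨ a = j := by
    intro a
    rw [localComp_adj, h₁z, h₁z, hz, hz, localComp_adj, hz, hz, hy]
    simp only [xor_def]
    grind
  rw [toggleAlongColumn, localComp_adj, h₂x, h₂y, h₂y, Sym2.eq_iff]
  simp only [xor_def]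
  grind

-- `U` holds the columns used so far, one per edge of `F`.
theorem exists_hasVertexMinor_kOneBip_adj_xV_iff (F : Finset (Sym2 (Fin n)))
    (hF : ∀ e ∈ F, ¬e.IsDiag) (hFm : F.card ≤ m) :
    ∃ H, HasVertexMinor (KOneBip n m) H ∧ (∀ a b, H.Adj (xV a) (xV b) ↔ s(a, b) ∈ F) ∧
      ∃ U : Finset (Fin m), U.card ≤ F.card ∧ ∀ c ∉ U, IsPristineColumn H c := by
  induction F using Finset.induction_on with
  | empty =>
    exact ⟨KOneBip n m, .refl, by simp [kOneBip_not_adj_xV],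
      ∅, le_rfl, fun c _ => kOneBip_isPristineColumn c⟩
  | @insert e F heF ih =>
    obtain ⟨H, hH, hHx, U, hU, hUc⟩ := ih (fun e he => hF e (F.mem_insert_of_mem he))
      ((F.card_le_card (F.subset_insert e)).trans hFm)
    obtain ⟨c, -, hcU⟩ : ∃ c ∈ Finset.univ, c ∉ U := by
      refine Finset.exists_mem_notMem_of_card_lt_card ?_
      rw [Finset.card_insert_of_notMem heF] at hFm
      rw [Finset.card_univ, Fintype.card_fin]
      omega
    obtain ⟨i, j, rfl⟩ : ∃ i j, e = s(i, j) := Sym2.exists.1 ⟨e, rfl⟩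
    have hij : i ≠ j := by simpa using hF _ (F.mem_insert_self _)
    refine ⟨toggleAlongColumn H i j c, hH.trans (hasVertexMinor_toggleAlongColumn H i j c),
      fun a b => ?_, insert c U, ?_, fun c' hc' => ?_⟩
    · rw [toggleAlongColumn_adj_xV (hUc c hcU) hij, hHx, Finset.mem_insert]
      by_cases hab : s(a, b) = s(i, j) <;> simp [xor_def, hab, heF]
    · rw [Finset.card_insert_of_notMem heF]
      exact (Finset.card_insert_le c U).trans (Nat.succ_le_succ hU)
    · rw [Finset.mem_insert, not_or] at hc'
      exact (hUc c' hc'.2).toggleAlongColumn hc'.1 i j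

theorem hasVertexMinor_kOneBip_of_card_edgeFinset_le (G : SimpleGraph (Fin n))
    [DecidableRel G.Adj] (hG : G.edgeFinset.card ≤ m) : HasVertexMinor (KOneBip n m) G := by
  obtain ⟨H, hH, hHx, -⟩ := exists_hasVertexMinor_kOneBip_adj_xV_iff G.edgeFinset
    (fun e he => G.not_isDiag_of_mem_edgeSet (mem_edgeFinset.1 he)) hG
  exact hH.trans (.of_embedding ⟨⟨xV, Sum.inl_injective⟩, fun {a b} => by simp [hHx]⟩)

end KOneBip

theorem kOneBip_contains_all_as_vertexMinor_general (n : ℕ)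
    (W : Type) [Fintype W] (hW : Fintype.card W = n) (G : SimpleGraph W) :
    HasVertexMinor (KOneBip n (n.choose 2)) G := by
  classical
  let e : W ≃ Fin n := Fintype.equivFinOfCardEq hW
  have hcard : (G.map e.toEmbedding).edgeFinset.card ≤ n.choose 2 := by
    simpa using card_edgeFinset_le_card_choose_two (G := G.map e.toEmbedding)
  exact (hasVertexMinor_kOneBip_of_card_edgeFinset_le _ hcard).trans
    (HasVertexMinor.of_iso (Iso.map e G).symm)

/-- **Lemma 2.1.** The graph `K¹_{n, C(n,2)}` contains every `n`-vertex graph as a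
vertex-minor. -/
theorem kOneBip_contains_all_as_vertexMinor (n : ℕ) (hn : 0 < n)
    (W : Type) [Fintype W] (hW : Fintype.card W = n) (G : SimpleGraph W) :
    HasVertexMinor (KOneBip n (n.choose 2)) G :=
  kOneBip_contains_all_as_vertexMinor_general n W hW G
end

section
/- Let c, k, κ be positive integers. Let G be a graph with χ^{(8)}(G) ≤ κ and let C ⊆ V(G) satisfy χ(G[C]) ≥ c + kκ. Then there is a lollipop (P, C′) contained in C with χ(G[C′]) ≥ c, together with a k-stripe of (P, C′). -/
open SimpleGraph

/-!
The path is grown greedily. Given a lollipop `(P, D)` ending at `t`, the `ρ`-ball around `t`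
carries at most `κ` colours, so `D` minus that ball contains a connected set `M` with
`χ(M) ≥ χ(D) - κ`. Extending `P` by a shortest path through `D` from `t` to a neighbour of `M`
gives a new lollipop `(P', M)`, and the vertex following `t` on the extension is at distance at
least `ρ` from `M`, hence from everything chosen afterwards. Starting from a one-vertex path in a
connected piece of `C` and repeating this `k` times produces the `k`-stripe.
-/

section Chromatic
variable {W V : Type*}

lemma SimpleGraph.Colorable.chi_le {H : SimpleGraph W} {n : ℕ} (h : H.Colorable n) :
    chi H ≤ n :=
  ENat.toNat_le_of_le_natCast h.chromaticNumber_le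

lemma colorable_chi [Finite W] (H : SimpleGraph W) : H.Colorable (chi H) :=
  colorable_chromaticNumber_of_fintype H

lemma chi_le_iff_colorable [Finite W] {H : SimpleGraph W} {n : ℕ} :
    chi H ≤ n ↔ H.Colorable n :=
  ⟨fun h => (colorable_chi H).mono h, Colorable.chi_le⟩

lemma chi_le_of_hom {W' : Type*} [Finite W'] {H : SimpleGraph W} {H' : SimpleGraph W'}
    (f : H →g H') : chi H ≤ chi H' :=
  ((colorable_chi H').of_hom f).chi_le

variable (G : SimpleGraph V)

lemma exists_adj_of_two_le_chi {S : Set V} (h : 2 ≤ chi (G.induce S)) :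
    ∃ a ∈ S, ∃ b ∈ S, G.Adj a b := by
  by_contra! hS
  have : (G.induce S).Colorable 1 := colorable_one_iff.mpr <| by
    ext ⟨u, hu⟩ ⟨v, hv⟩
    simpa using hS u hu v hv
  have := this.chi_le
  omega

variable [Finite V]

lemma chi_induce_mono {A B : Set V} (h : A ⊆ B) : chi (G.induce A) ≤ chi (G.induce B) :=
  chi_le_of_hom (G.induceHomOfLE h).toHom

lemma chi_induce_union_le (A B : Set V) :
    chi (G.induce (A ∪ B)) ≤ chi (G.induce A) + chi (G.induce B) := by
  classical
  obtain ⟨cA⟩ := colorable_chi (G.induce A)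
  obtain ⟨cB⟩ := colorable_chi (G.induce B)
  let col : (G.induce (A ∪ B)).Coloring (Fin _ ⊕ Fin _) := Coloring.mk
    (fun v => if h : v.1 ∈ A then .inl (cA ⟨v, h⟩) else .inr (cB ⟨v, v.2.resolve_left h⟩))
    (by
      rintro ⟨u, hu⟩ ⟨v, hv⟩ huv
      split_ifs with h₁ h₂ h₂ <;> simp only [ne_eq, Sum.inl.injEq, Sum.inr.injEq, reduceCtorEq,
        not_false_eq_true]
      · exact cA.valid (induce_adj.mpr huv)
      · exact cB.valid (induce_adj.mpr huv))
  simpa using col.colorable.chi_le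

lemma chi_induce_le_of_subset_ballSet {ρ κ : ℕ} (hball : chiBall G ρ ≤ κ) {S : Set V} {v : V}
    (h : S ⊆ ballSet G v ρ) : chi (G.induce S) ≤ κ :=
  (chi_induce_mono G h).trans <| (le_ciSup (Set.finite_range _).bddAbove v).trans hball

lemma exists_connected_subset_chi_ge {S : Set V} (h : 1 ≤ chi (G.induce S)) :
    ∃ M ⊆ S, (G.induce M).Connected ∧ chi (G.induce S) ≤ chi (G.induce M) := by
  have hS : ¬ (G.induce S).Colorable (chi (G.induce S) - 1) := by
    rw [← chi_le_iff_colorable]; omega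
  obtain ⟨c, hc⟩ : ∃ c : (G.induce S).ConnectedComponent,
      ¬ c.toSimpleGraph.Colorable (chi (G.induce S) - 1) := by
    by_contra! h
    exact hS (colorable_iff_forall_connectedComponent.mpr h)
  let f : c.toSimpleGraph →g G.induce (Subtype.val '' c.supp) :=
    induceHom (Embedding.induce S).toHom (Set.mapsTo_image _ _)
  have hf : Function.Surjective f := by
    rintro ⟨_, v, hv, rfl⟩
    exact ⟨⟨v, hv⟩, rfl⟩
  refine ⟨Subtype.val '' c.supp, by rintro _ ⟨v, -, rfl⟩; exact v.2,
    c.connected_toSimpleGraph.map f hf, ?_⟩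
  rw [← chi_le_iff_colorable] at hc
  exact (by omega : chi (G.induce S) ≤ chi c.toSimpleGraph).trans (chi_le_of_hom f)

end Chromatic

section Walks
variable {V : Type*} {G : SimpleGraph V}

namespace SimpleGraph.Walk

lemma exists_shorter_of_adj_not_toSubgraph_adj {u v x y : V} (q : G.Walk u v)
    (hx : x ∈ q.support) (hy : y ∈ q.support) (hxy : G.Adj x y) (hq : ¬ q.toSubgraph.Adj x y) :
    ∃ q' : G.Walk u v, (∀ z ∈ q'.support, z ∈ q.support) ∧ q'.length < q.length := by
  obtain ⟨i, rfl, hi⟩ := mem_support_iff_exists_getVert.mp hx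
  obtain ⟨j, rfl, hj⟩ := mem_support_iff_exists_getVert.mp hy
  clear hx hy
  wlog hij : i < j generalizing i j
  · have hji : j < i := by
      rcases lt_trichotomy i j with h | rfl | h
      exacts [absurd h hij, absurd hxy (G.irrefl), h]
    exact this j hj i hi hxy.symm (fun h => hq h.symm) hji
  have hij' : i + 1 ≠ j := by
    rintro rfl
    exact hq (q.toSubgraph_adj_getVert (by omega))
  refine ⟨(q.take i).append (cons hxy (q.drop j)), fun z hz => ?_, ?_⟩
  · simp only [mem_support_append_iff, support_cons, List.mem_cons, support_take,
      drop_support_eq_support_drop_min] at hz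
    rcases hz with hz | rfl | hz
    exacts [List.mem_of_mem_take hz, q.getVert_mem_support i, List.mem_of_mem_drop hz]
  · simp only [length_append, length_cons, take_length, drop_length]
    omega

lemma exists_prefix_adj_of_notMem_of_mem {M : Set V} {u v : V} (w : G.Walk u v)
    (hu : u ∉ M) (hv : v ∈ M) :
    ∃ v', ∃ q : G.Walk u v', (∀ z ∈ q.support, z ∈ w.support ∧ z ∉ M) ∧ ∃ m ∈ M, G.Adj v' m := by
  induction w with
  | nil => exact absurd hv hu
  | @cons u b v hub p ih =>
    by_cases hb : b ∈ M
    · exact ⟨u, nil, by simpa using hu, b, hb, hub⟩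
    · obtain ⟨v', q, hq, hm⟩ := ih hb hv
      refine ⟨v', cons hub q, fun z hz => ?_, hm⟩
      rcases List.mem_cons.mp hz with rfl | hz
      · simpa using hu
      · exact ⟨by simp [(hq z hz).1], (hq z hz).2⟩

end SimpleGraph.Walk

lemma isInducedPath_nil (a : V) : IsInducedPath G (Walk.nil : G.Walk a a) :=
  ⟨Walk.IsPath.nil, by simp⟩

-- A shortest walk from `u` to `T` inside `A` is an induced path meeting `T` only at its end.
lemma exists_isInducedPath_of_walk_to_set {A T : Set V} {u v : V} (w : G.Walk u v)
    (hwA : ∀ x ∈ w.support, x ∈ A) (hv : v ∈ T) :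
    ∃ v', ∃ q : G.Walk u v', v' ∈ T ∧ (∀ x ∈ q.support, x ∈ A) ∧ IsInducedPath G q ∧
      ∀ x ∈ q.support, x ∈ T → x = v' := by
  classical
  have hex : ∃ n, ∃ v', ∃ q : G.Walk u v', v' ∈ T ∧ (∀ x ∈ q.support, x ∈ A) ∧ q.length = n :=
    ⟨_, v, w, hv, hwA, rfl⟩
  obtain ⟨v', q₀, hv', hq₀A, hq₀⟩ := Nat.find_spec hex
  have hmin : ∀ v'' (q' : G.Walk u v''), v'' ∈ T → (∀ x ∈ q'.support, x ∈ A) →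
      q₀.bypass.length ≤ q'.length := fun v'' q' hv'' hq'A =>
    q₀.length_bypass_le_length.trans (hq₀ ▸ Nat.find_min' hex ⟨v'', q', hv'', hq'A, rfl⟩)
  have hqA : ∀ x ∈ q₀.bypass.support, x ∈ A := fun x hx =>
    hq₀A x (q₀.support_bypass_subset_support hx)
  refine ⟨v', q₀.bypass, hv', hqA, ⟨q₀.bypass_isPath, fun x hx y hy hxy => ?_⟩,
    fun x hx hxT => ?_⟩
  · by_contra h
    obtain ⟨q', hq', hlt⟩ := q₀.bypass.exists_shorter_of_adj_not_toSubgraph_adj hx hy hxy h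
    exact hlt.not_ge (hmin v' q' hv' fun z hz => hqA z (hq' z hz))
  · by_contra hne
    exact (Walk.length_takeUntil_lt_length hx hne).not_ge
      (hmin x _ hxT fun z hz => hqA z (Walk.support_takeUntil_subset_support _ hx hz))

lemma IsInducedPath.append {a t b : V} {p : G.Walk a t} {q : G.Walk t b}
    (hp : IsInducedPath G p) (hq : IsInducedPath G q)
    (h : ∀ x ∈ p.support, ∀ y ∈ q.support, x ≠ t → y ≠ t → x ≠ y ∧ ¬ G.Adj x y) :
    IsInducedPath G (p.append q) := by
  have htq : t ∉ q.support.tail := by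
    have := hq.1.support_nodup
    rw [← q.cons_tail_support, List.nodup_cons] at this
    exact this.1
  refine ⟨?_, fun x hx y hy hxy => ?_⟩
  · rw [Walk.isPath_def, Walk.support_append, List.nodup_append]
    refine ⟨hp.1.support_nodup, hq.1.support_nodup.sublist (List.tail_sublist _), ?_⟩
    rintro x hx y hy rfl
    have hxt : x ≠ t := fun hxt => htq (hxt ▸ hy)
    exact (h x hx x (List.mem_of_mem_tail hy) hxt hxt).1 rfl
  rw [Walk.toSubgraph_append, Subgraph.sup_adj]
  rw [Walk.mem_support_append_iff] at hx hy
  rcases hx with hx | hx <;> rcases hy with hy | hy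
  · exact .inl (hp.2 x hx y hy hxy)
  · by_cases hxt : x = t
    · exact .inr (hq.2 x (hxt ▸ q.start_mem_support) y hy hxy)
    by_cases hyt : y = t
    · exact .inl (hp.2 x hx y (hyt ▸ p.end_mem_support) hxy)
    exact absurd hxy (h x hx y hy hxt hyt).2
  · by_cases hyt : y = t
    · exact .inr (hq.2 x hx y (hyt ▸ q.start_mem_support) hxy)
    by_cases hxt : x = t
    · exact .inl (hp.2 x (hxt ▸ p.end_mem_support) y hy hxy)
    exact absurd hxy.symm (h y hy x hx hyt hxt).2
  · exact .inr (hq.2 x hx y hy hxy)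

end Walks

section Lollipop
variable {V : Type*} {G : SimpleGraph V}

structure IsLollipop (G : SimpleGraph V) {a t : V} (p : G.Walk a t) (C : Set V) : Prop where
  isInducedPath : IsInducedPath G p
  connected : (G.induce C).Connected
  exists_adj_end : ∃ x ∈ C, G.Adj t x
  eq_end_of_adj : ∀ w ∈ p.support, (∃ x ∈ C, G.Adj w x) → w = t

structure IsStripe (G : SimpleGraph V) {a t : V} (p : G.Walk a t) (C : Set V) (ρ : ℕ) {k : ℕ}
    (s : Fin k → V) : Prop where
  mem_support : ∀ i, s i ∈ p.support
  distGE_pairwise : ∀ i j, i ≠ j → distGE G (s i) (s j) ρ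
  distGE_set : ∀ i, ∀ w ∈ C, distGE G (s i) w ρ

lemma distGE.ne {u v : V} {ρ : ℕ} (h : distGE G u v ρ) (hρ : 0 < ρ) : u ≠ v := by
  rintro rfl
  have := h Walk.nil
  simp at this
  omega

lemma distGE_comm {u v : V} {n : ℕ} (h : distGE G u v n) : distGE G v u n := fun p => by
  simpa using h p.reverse

lemma IsStripe.injective {a t : V} {p : G.Walk a t} {C : Set V} {ρ k : ℕ} {s : Fin k → V}
    (hs : IsStripe G p C ρ s) (hρ : 0 < ρ) : Function.Injective s := fun i j hij => by
  by_contra hne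
  exact (hs.distGE_pairwise i j hne).ne hρ hij

lemma mem_ballSet_self (t : V) (ρ : ℕ) : t ∈ ballSet G t ρ :=
  ⟨Walk.nil, by simp⟩

lemma mem_ballSet_of_adj {t z : V} {ρ : ℕ} (hρ : 0 < ρ) (h : G.Adj t z) : z ∈ ballSet G t ρ :=
  ⟨Walk.cons h Walk.nil, by simp; omega⟩

lemma distGE_of_adj_of_notMem_ballSet {t b m : V} {ρ : ℕ} (h : G.Adj t b)
    (hm : m ∉ ballSet G t ρ) : distGE G b m ρ := fun w => by
  by_contra! hw
  exact hm ⟨Walk.cons h w, by simp; omega⟩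

lemma exists_connected_subset_sdiff_ballSet [Finite V] {ρ κ : ℕ} (hball : chiBall G ρ ≤ κ)
    (t : V) {D : Set V} {x : ℕ} (hx : 1 ≤ x) (hD : x + κ ≤ chi (G.induce D)) :
    ∃ M ⊆ D \ ballSet G t ρ, (G.induce M).Connected ∧ x ≤ chi (G.induce M) := by
  have hsplit := chi_induce_union_le G (D ∩ ballSet G t ρ) (D \ ballSet G t ρ)
  rw [Set.inter_union_sdiff] at hsplit
  have hnear : chi (G.induce (D ∩ ballSet G t ρ)) ≤ κ :=
    chi_induce_le_of_subset_ballSet G hball Set.inter_subset_right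
  obtain ⟨M, hM, hMconn, hMχ⟩ :=
    exists_connected_subset_chi_ge G (S := D \ ballSet G t ρ) (by omega)
  exact ⟨M, hM, hMconn, by omega⟩

lemma exists_isInducedPath_to_neighbor {t y : V} {D M : Set V} (hD : (G.induce D).Connected)
    (hy : y ∈ D) (hty : G.Adj t y) (hMD : M ⊆ D) (hM : M.Nonempty) (htM : t ∉ M) :
    ∃ v, ∃ q : G.Walk t v, (∀ w ∈ q.support, w ∈ insert t D ∧ w ∉ M) ∧ IsInducedPath G q ∧
      (∃ m ∈ M, G.Adj v m) ∧ ∀ w ∈ q.support, (∃ m ∈ M, G.Adj w m) → w = v := by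
  obtain ⟨m, hm⟩ := hM
  obtain ⟨W, hW⟩ : ∃ W : G.Walk y m, ∀ w ∈ W.support, w ∈ D := by
    obtain ⟨W⟩ := hD.preconnected ⟨y, hy⟩ ⟨m, hMD hm⟩
    have hWD : ∀ w ∈ (W.map (Embedding.induce D).toHom).support, w ∈ D := by
      intro w hw
      rw [Walk.support_map] at hw
      obtain ⟨w, -, rfl⟩ := List.mem_map.mp hw
      exact w.2
    exact ⟨_, hWD⟩
  let W' : G.Walk t m := .cons hty W
  have hW' : ∀ w ∈ W'.support, w ∈ insert t D := by
    intro w hw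
    rcases List.mem_cons.mp hw with rfl | hw
    exacts [Set.mem_insert _ _, Set.mem_insert_of_mem _ (hW w hw)]
  obtain ⟨v₀, q₀, hq₀, hv₀⟩ := W'.exists_prefix_adj_of_notMem_of_mem htM hm
  obtain ⟨v, q, hv, hqA, hq, hvT⟩ := exists_isInducedPath_of_walk_to_set
    (A := insert t D \ M) (T := {w | ∃ m ∈ M, G.Adj w m}) q₀
    (fun w hw => ⟨hW' w (hq₀ w hw).1, (hq₀ w hw).2⟩) hv₀
  exact ⟨v, q, hqA, hq, hv, hvT⟩

end Lollipop

section Step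
variable {V : Type*} [Finite V] {G : SimpleGraph V} {ρ κ : ℕ}

theorem IsLollipop.exists_append (hball : chiBall G ρ ≤ κ) (hρ : 0 < ρ) {a t : V}
    {p : G.Walk a t} {D : Set V} (hp : IsLollipop G p D) (hpD : ∀ w ∈ p.support, w ≠ t → w ∉ D)
    {x : ℕ} (hx : 1 ≤ x) (hD : x + κ ≤ chi (G.induce D)) :
    ∃ t', ∃ q : G.Walk t t', ∃ M ⊆ D, IsLollipop G (p.append q) M ∧ x ≤ chi (G.induce M) ∧
      (∀ w ∈ (p.append q).support, w ∉ M) ∧ (∀ w ∈ q.support, w = t ∨ w ∈ D) ∧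
      ∃ b ∈ q.support, b ∈ D ∧ ∀ m ∈ M, distGE G b m ρ := by
  obtain ⟨M, hM, hMconn, hMχ⟩ := exists_connected_subset_sdiff_ballSet hball t hx hD
  have hMD : M ⊆ D := fun m hm => (hM hm).1
  have hfar : ∀ m ∈ M, m ∉ ballSet G t ρ := fun m hm => (hM hm).2
  have htM : t ∉ M := fun h => hfar t h (mem_ballSet_self t ρ)
  have htM' : ¬ ∃ m ∈ M, G.Adj t m := fun ⟨m, hm, htm⟩ => hfar m hm (mem_ballSet_of_adj hρ htm)
  obtain ⟨y, hy, hty⟩ := hp.exists_adj_end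
  obtain ⟨t', q, hqA, hq, hqM, hqM'⟩ := exists_isInducedPath_to_neighbor hp.connected hy hty hMD
    (Set.nonempty_coe_sort.mp hMconn.nonempty) htM
  have hqD : ∀ w ∈ q.support, w ≠ t → w ∈ D := fun w hw hwt => (hqA w hw).1.resolve_left hwt
  have hqnil : ¬ q.Nil := fun h => htM' (h.eq ▸ hqM)
  have hb : G.Adj t q.snd := q.adj_snd hqnil
  refine ⟨t', q, M, hMD, ⟨?_, hMconn, hqM, fun w hw hwM => ?_⟩, hMχ, fun w hw hwM => ?_,
    fun w hw => (hqA w hw).1, q.snd, q.getVert_mem_support 1,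
    hqD _ (q.getVert_mem_support 1) hb.ne',
    fun m hm => distGE_of_adj_of_notMem_ballSet hb (hfar m hm)⟩
  · refine hp.isInducedPath.append hq fun x hx y hy hxt hyt => ⟨fun hxy => ?_, fun hxy => ?_⟩
    · exact hpD x hx hxt (hxy ▸ hqD y hy hyt)
    · exact hxt (hp.eq_end_of_adj x hx ⟨y, hqD y hy hyt, hxy⟩)
  · rcases (Walk.mem_support_append_iff _ _).mp hw with hw | hw
    · obtain ⟨m, hm, hwm⟩ := hwM
      obtain rfl := hp.eq_end_of_adj w hw ⟨m, hMD hm, hwm⟩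
      exact absurd ⟨m, hm, hwm⟩ htM'
    · exact hqM' w hw hwM
  · rcases (Walk.mem_support_append_iff _ _).mp hw with hw | hw
    · by_cases hwt : w = t
      · exact htM (hwt ▸ hwM)
      · exact hpD w hw hwt (hMD hwM)
    · exact (hqA w hw).2 hwM

end Step

section Iteration
variable {V : Type*} [Finite V] {G : SimpleGraph V} {ρ κ : ℕ}

-- The end `t` may lie in `D`, as it does for the one-vertex path the construction starts from.
theorem IsLollipop.exists_append_isStripe (hball : chiBall G ρ ≤ κ) (hρ : 0 < ρ) (k : ℕ)
    {x : ℕ} (hx : 1 ≤ x) {a t : V} {p : G.Walk a t} {D : Set V} (hp : IsLollipop G p D)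
    (hpD : ∀ w ∈ p.support, w ≠ t → w ∉ D) (hD : x + k * κ ≤ chi (G.induce D)) :
    ∃ t', ∃ q : G.Walk t t', ∃ C' ⊆ D, ∃ s : Fin k → V, IsLollipop G (p.append q) C' ∧
      x ≤ chi (G.induce C') ∧ (∀ w ∈ q.support, w = t ∨ w ∈ D) ∧
      IsStripe G (p.append q) C' ρ s ∧ ∀ i, s i ∈ D := by
  induction k generalizing a t p D with
  | zero =>
    refine ⟨t, .nil, D, subset_rfl, finZeroElim, by rwa [Walk.append_nil], by simpa using hD,
      by simp, ⟨finZeroElim, finZeroElim, finZeroElim⟩, finZeroElim⟩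
  | succ k ih =>
    obtain ⟨t₁, q₁, M, hMD, hp₁, hMχ, hp₁M, hq₁D, b, hb, hbD, hbM⟩ :=
      hp.exists_append hball hρ hpD (x := x + k * κ) (by omega) (by convert hD using 1; ring)
    obtain ⟨t', q₂, C', hC'M, s, hC', hC'χ, hq₂M, hs, hsM⟩ :=
      ih hp₁ (fun w hw _ => hp₁M w hw) hMχ
    rw [← Walk.append_assoc] at hC' hs
    have hb' : b ∈ (p.append (q₁.append q₂)).support := by
      simp only [Walk.mem_support_append_iff]
      exact .inr (.inl hb)
    have hstripe : IsStripe G (p.append (q₁.append q₂)) C' ρ (Fin.cons b s : Fin (k + 1) → V) := by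
      refine ⟨Fin.cases hb' hs.mem_support, fun i j hij => ?_,
        Fin.cases (fun w hw => hbM w (hC'M hw)) hs.distGE_set⟩
      cases i using Fin.cases <;> cases j using Fin.cases
      · exact absurd rfl hij
      · exact hbM _ (hsM _)
      · exact distGE_comm (hbM _ (hsM _))
      · exact hs.distGE_pairwise _ _ (ne_of_apply_ne Fin.succ hij)
    refine ⟨t', q₁.append q₂, C', hC'M.trans hMD, Fin.cons b s, hC', hC'χ, fun w hw => ?_,
      hstripe, Fin.cases hbD fun i => hMD (hsM i)⟩
    rcases (Walk.mem_support_append_iff _ _).mp hw with hw | hw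
    · exact hq₁D w hw
    · rcases hq₂M w hw with rfl | hw
      exacts [hq₁D _ q₁.end_mem_support, .inr (hMD hw)]

end Iteration

/-- **Lemma 5.1.** If `χ^{(8)}(G) ≤ κ` and `χ(C) ≥ c + kκ`, then there is a lollipop
`(P, C')` contained in `C` with `χ(C') ≥ c` and a `k`-stripe of `(P, C')`. -/
theorem lollipop_with_stripe (V : Type) [Fintype V] (c k κ : ℕ)
    (hc : 0 < c) (hk : 0 < k) (hκ : 0 < κ)
    (G : SimpleGraph V) (hball : chiBall G 8 ≤ κ)
    (C : Set V) (hC : c + k * κ ≤ chi (G.induce C)) :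
    ∃ (a t : V) (p : G.Walk a t) (C' : Set V),
      (∀ w ∈ p.support, w ∈ C) ∧ C' ⊆ C ∧
      IsInducedPath G p ∧ (G.induce C').Connected ∧
      (∃ x ∈ C', G.Adj t x) ∧
      (∀ w ∈ p.support, (∃ x ∈ C', G.Adj w x) → w = t) ∧
      c ≤ chi (G.induce C') ∧
      ∃ s : Fin k → V, Function.Injective s ∧
        (∀ i, s i ∈ p.support) ∧
        (∀ i j, i ≠ j → distGE G (s i) (s j) 8) ∧
        (∀ i, ∀ w ∈ C', distGE G (s i) w 8) := by
  have hkκ := Nat.mul_pos hk hκ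
  obtain ⟨C₀, hC₀C, hC₀conn, hC₀χ⟩ := exists_connected_subset_chi_ge G (S := C) (by omega)
  obtain ⟨a, ha, y, hy, hay⟩ := exists_adj_of_two_le_chi G (S := C₀) (by omega)
  have hstart : IsLollipop G (Walk.nil : G.Walk a a) C₀ :=
    ⟨isInducedPath_nil a, hC₀conn, ⟨y, hy, hay⟩, by simp⟩
  obtain ⟨t, q, C', hC'C₀, s, hq, hχ, hqC₀, hs, -⟩ :=
    hstart.exists_append_isStripe hball (by norm_num) k hc (by simp) (hC.trans hC₀χ)
  refine ⟨a, t, q, C', fun w hw => ?_, hC'C₀.trans hC₀C, hq.isInducedPath, hq.connected,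
    hq.exists_adj_end, hq.eq_end_of_adj, hχ, s, hs.injective (by norm_num), hs.mem_support,
    hs.distGE_pairwise, hs.distGE_set⟩
  rcases hqC₀ w hw with rfl | hw
  exacts [hC₀C ha, hC₀C hw]
end
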